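/- arXiv:1104.4491 — 2 statements merged into one kernel-verified Lean document; each statement's English description precedes it below -/
import Mathlib

section
/- Let X, Y be independent exponential(1) random variables, g1 = (ρ^r-1)/ρ, g2 = (ρ^{2r}-1)/ρ. Then P(X + Y < g2 | X < g1) = (1 - e^{-g1} - g1 e^{-g2})/(1 - e^{-g1}), and for 0 < r < 1/2 this conditional probability is exponentially equal to ρ^{2r-1} as ρ→∞, i.e., lim_{ρ→∞} log P(X+Y<g2 | X<g1)/log ρ = 2r - 1. -/
/-!
The tail hypotheses identify the laws of `X` and `Y` as `Exp(1)`, and independence makes their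
joint law the product measure, so for `0 ≤ a ≤ b`
`P(X + Y < b, X < a) = ∫₀ᵃ (e^{-x} - e^{-b}) dx = 1 - e^{-a} - a e^{-b}`.
As `ρ → ∞`, `g1, g2 → 0` with `g1 = o(g2)`, and expanding the exponentials to second order shows
that the conditional probability is asymptotic to `g2 ρ`, whose logarithm is
`(2r - 1) log ρ + o(log ρ)`.
-/

open MeasureTheory ProbabilityTheory Filter Real Set Topology
open scoped ENNReal

lemma map_eq_expMeasure_of_measure_lt {Ω : Type*} [MeasurableSpace Ω] {μ : Measure Ω}
    [IsProbabilityMeasure μ] {X : Ω → ℝ} (hX : Measurable X) {r : ℝ} (hr : 0 < r)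
    (htail : ∀ x, 0 ≤ x → μ {ω | x < X ω} = ENNReal.ofReal (exp (-(r * x)))) :
    μ.map X = expMeasure r := by
  have := isProbabilityMeasure_expMeasure hr
  have := Measure.isProbabilityMeasure_map (μ := μ) hX.aemeasurable
  have hIic : ∀ x, 0 ≤ x → (μ.map X).real (Iic x) = 1 - exp (-(r * x)) := fun x hx => by
    rw [map_measureReal_apply hX measurableSet_Iic, ← compl_Ioi, preimage_compl,
      probReal_compl_eq_one_sub (hX measurableSet_Ioi), measureReal_def,
      show X ⁻¹' Ioi x = {ω | x < X ω} from rfl, htail x hx, ENNReal.toReal_ofReal (exp_pos _).le]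
  refine Measure.eq_of_cdf _ _ (StieltjesFunction.ext fun x => ?_)
  rw [cdf_expMeasure_eq hr, cdf_eq_real]
  split_ifs with hx
  · exact hIic x hx
  · refine le_antisymm ?_ measureReal_nonneg
    calc (μ.map X).real (Iic x) ≤ (μ.map X).real (Iic 0) :=
          measureReal_mono (Iic_subset_Iic.2 (not_le.1 hx).le)
      _ = 0 := by simp [hIic 0 le_rfl]

lemma setLIntegral_expMeasure_one_Iio {f : ℝ → ℝ≥0∞} (hf : Measurable f) (a : ℝ) :
    ∫⁻ x in Iio a, f x ∂expMeasure 1 = ∫⁻ x in Ico 0 a, ENNReal.ofReal (exp (-x)) * f x := by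
  rw [expMeasure, gammaMeasure, setLIntegral_withDensity_eq_setLIntegral_mul _ (f := gammaPDF 1 1)
      (measurable_gammaPDFReal 1 1).ennreal_ofReal hf measurableSet_Iio,
    ← lintegral_indicator measurableSet_Iio, ← lintegral_indicator measurableSet_Ico]
  congr 1 with x
  change (Iio a).indicator (fun x => exponentialPDF 1 x * f x) x = _
  by_cases hx : 0 ≤ x
  · by_cases hxa : x < a
    · simp [hxa, hx, exponentialPDF_of_nonneg hx]
    · simp [hxa]
  · simp [hx, exponentialPDF_of_neg (not_le.1 hx)]

lemma setLIntegral_Ico_ofReal {g : ℝ → ℝ} (hg : Continuous g) {a b : ℝ} (hab : a ≤ b)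
    (hg0 : ∀ x ∈ Ico a b, 0 ≤ g x) :
    ∫⁻ x in Ico a b, ENNReal.ofReal (g x) = ENNReal.ofReal (∫ x in a..b, g x) := by
  rw [intervalIntegral.integral_of_le hab, integral_Ioc_eq_integral_Ioo,
    ← integral_Ico_eq_integral_Ioo, ofReal_integral_eq_lintegral_ofReal
      (hg.integrableOn_Icc.mono_set Ico_subset_Icc_self)
      ((ae_restrict_iff' measurableSet_Ico).2 (.of_forall hg0))]

lemma expMeasure_one_Iio {t : ℝ} (ht : 0 ≤ t) :
    expMeasure 1 (Iio t) = ENNReal.ofReal (1 - exp (-t)) := by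
  rw [← setLIntegral_one, setLIntegral_expMeasure_one_Iio measurable_const]
  simp only [mul_one]
  rw [setLIntegral_Ico_ofReal (by fun_prop) ht fun x _ => (exp_pos _).le,
    intervalIntegral.integral_comp_neg (fun x => exp x), integral_exp]
  simp

lemma expMeasure_one_prod_setOf_add_lt_and_lt {a b : ℝ} (ha : 0 ≤ a) (hab : a ≤ b) :
    (expMeasure 1).prod (expMeasure 1) {p : ℝ × ℝ | p.1 + p.2 < b ∧ p.1 < a}
      = ENNReal.ofReal (1 - exp (-a) - a * exp (-b)) := by
  have hslice : ∀ x, expMeasure 1 (Prod.mk x ⁻¹' {p : ℝ × ℝ | p.1 + p.2 < b ∧ p.1 < a})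
      = (Iio a).indicator (fun x => ENNReal.ofReal (1 - exp (-(b - x)))) x := fun x => by
    by_cases hx : x < a
    · have : Prod.mk x ⁻¹' {p : ℝ × ℝ | p.1 + p.2 < b ∧ p.1 < a} = Iio (b - x) := by
        ext y; simp [hx, lt_sub_iff_add_lt']
      rw [this, expMeasure_one_Iio (by linarith), indicator_of_mem (mem_Iio.2 hx)]
    · have : Prod.mk x ⁻¹' {p : ℝ × ℝ | p.1 + p.2 < b ∧ p.1 < a} = ∅ := by
        ext y; simp [hx]
      rw [this, measure_empty, indicator_of_notMem (by simpa using hx)]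
  have hint : ∀ x ∈ Ico 0 a, ENNReal.ofReal (exp (-x)) * ENNReal.ofReal (1 - exp (-(b - x)))
      = ENNReal.ofReal (exp (-x) - exp (-b)) := fun x _ => by
    rw [← ENNReal.ofReal_mul (exp_pos _).le, mul_sub, mul_one, ← exp_add]
    ring_nf
  have := isProbabilityMeasure_expMeasure one_pos
  rw [Measure.prod_apply (by measurability), lintegral_congr hslice,
    lintegral_indicator measurableSet_Iio, setLIntegral_expMeasure_one_Iio (by fun_prop),
    setLIntegral_congr_fun measurableSet_Ico hint,
    setLIntegral_Ico_ofReal (by fun_prop) ha fun x hx => by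
      simpa using exp_le_exp.2 (show -b ≤ -x by linarith [hx.2]),
    intervalIntegral.integral_sub
      ((by fun_prop : Continuous fun x => exp (-x)).intervalIntegrable _ _)
      intervalIntegrable_const,
    intervalIntegral.integral_comp_neg (fun x => exp x), integral_exp]
  simp

lemma one_sub_exp_neg_sub_mul_exp_neg_nonneg {a b : ℝ} (ha : 0 ≤ a) (hab : a ≤ b) :
    0 ≤ 1 - exp (-a) - a * exp (-b) := by
  have hb : a * exp (-b) ≤ a * exp (-a) := by gcongr
  have h1 : exp (-a) * (1 + a) ≤ 1 := by
    calc exp (-a) * (1 + a) ≤ exp (-a) * exp a := by gcongr; linarith [add_one_le_exp a]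
      _ = 1 := by rw [← exp_add, neg_add_cancel, exp_zero]
  linarith

section Laws

variable {Ω : Type*} [MeasurableSpace Ω] {μ : Measure Ω} {X Y : Ω → ℝ}

lemma measure_lt_of_map_eq_expMeasure_one (hX : Measurable X) (hlaw : μ.map X = expMeasure 1)
    {a : ℝ} (ha : 0 ≤ a) : μ {ω | X ω < a} = ENNReal.ofReal (1 - exp (-a)) := by
  rw [← expMeasure_one_Iio ha, ← hlaw, Measure.map_apply hX measurableSet_Iio]
  rfl

lemma measure_add_lt_inter_lt_of_map_eq_expMeasure_one [IsFiniteMeasure μ]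
    (hX : Measurable X) (hY : Measurable Y) (hXY : IndepFun X Y μ)
    (hXlaw : μ.map X = expMeasure 1) (hYlaw : μ.map Y = expMeasure 1)
    {a b : ℝ} (ha : 0 ≤ a) (hab : a ≤ b) :
    μ ({ω | X ω + Y ω < b} ∩ {ω | X ω < a}) = ENNReal.ofReal (1 - exp (-a) - a * exp (-b)) := by
  have hpre : {ω | X ω + Y ω < b} ∩ {ω | X ω < a}
      = (fun ω => (X ω, Y ω)) ⁻¹' {p : ℝ × ℝ | p.1 + p.2 < b ∧ p.1 < a} := rfl
  rw [hpre, ← Measure.map_apply (hX.prodMk hY) (by measurability),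
    (indepFun_iff_map_prod_eq_prod_map_map hX.aemeasurable hY.aemeasurable).1 hXY,
    hXlaw, hYlaw, expMeasure_one_prod_setOf_add_lt_and_lt ha hab]

lemma toReal_measure_add_lt_inter_lt_div [IsFiniteMeasure μ]
    (hX : Measurable X) (hY : Measurable Y) (hXY : IndepFun X Y μ)
    (hXlaw : μ.map X = expMeasure 1) (hYlaw : μ.map Y = expMeasure 1)
    {a b : ℝ} (ha : 0 ≤ a) (hab : a ≤ b) :
    (μ ({ω | X ω + Y ω < b} ∩ {ω | X ω < a})).toReal / (μ {ω | X ω < a}).toReal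
      = (1 - exp (-a) - a * exp (-b)) / (1 - exp (-a)) := by
  rw [measure_add_lt_inter_lt_of_map_eq_expMeasure_one hX hY hXY hXlaw hYlaw ha hab,
    measure_lt_of_map_eq_expMeasure_one hX hXlaw ha,
    ENNReal.toReal_ofReal (one_sub_exp_neg_sub_mul_exp_neg_nonneg ha hab),
    ENNReal.toReal_ofReal (sub_nonneg.2 (exp_le_one_iff.2 (neg_nonpos.2 ha)))]

end Laws

section Asymptotics

variable {α : Type*} {l : Filter α}

lemma tendsto_one_sub_exp_neg_sub_div {u w : α → ℝ} (hu : Tendsto u l (𝓝 0))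
    (huw : Tendsto (fun x => u x ^ 2 / w x) l (𝓝 0)) :
    Tendsto (fun x => (1 - exp (-u x) - u x) / w x) l (𝓝 0) := by
  refine squeeze_zero_norm' ?_ (by simpa using huw.norm)
  filter_upwards [hu.norm.eventually (ge_mem_nhds (by simp : ‖(0 : ℝ)‖ < 1))] with x hx
  have hquad := abs_exp_sub_one_sub_id_le (x := -u x) (by rwa [abs_neg])
  rw [norm_div, Real.norm_eq_abs, Real.norm_eq_abs]
  gcongr
  calc |1 - exp (-u x) - u x| = |exp (-u x) - 1 - -u x| := by rw [← abs_neg]; ring_nf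
    _ ≤ (-u x) ^ 2 := hquad
    _ = u x ^ 2 := neg_sq _

lemma tendsto_one_sub_exp_neg_sub_mul_exp_neg_div_div {u v : α → ℝ}
    (hu : Tendsto u l (𝓝 0)) (hv : Tendsto v l (𝓝 0))
    (huv : Tendsto (fun x => u x / v x) l (𝓝 0)) (hne : ∀ᶠ x in l, u x ≠ 0 ∧ v x ≠ 0) :
    Tendsto (fun x => (1 - exp (-u x) - u x * exp (-v x)) / (1 - exp (-u x)) / v x)
      l (𝓝 1) := by
  have hA := tendsto_one_sub_exp_neg_sub_div (w := fun x => u x * v x) hu <| huv.congr' <| by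
    filter_upwards [hne] with x hx
    rw [sq, mul_div_mul_left _ _ hx.1]
  have hB := tendsto_one_sub_exp_neg_sub_div (w := v) hv <| hv.congr' <| by
    filter_upwards [hne] with x hx
    rw [sq, mul_div_cancel_right₀ _ hx.2]
  have hC := tendsto_one_sub_exp_neg_sub_div (w := u) hu <| hu.congr' <| by
    filter_upwards [hne] with x hx
    rw [sq, mul_div_cancel_right₀ _ hx.1]
  -- To second order, the numerator is `u v` and the denominator `u`, with errors
  -- `(1 - e^{-u} - u) + u (1 - e^{-v} - v)` and `1 - e^{-u} - u`.
  have hlim := ((hA.add_const 1).add hB).div (hC.const_add 1) (by norm_num)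
  rw [zero_add, add_zero, div_one] at hlim
  refine hlim.congr' ?_
  filter_upwards [hne] with x ⟨hu0, hv0⟩
  have hD : 1 - exp (-u x) ≠ 0 := by
    rw [sub_ne_zero, ne_comm, Ne, exp_eq_one_iff, neg_eq_zero]
    exact hu0
  simp only [Pi.div_apply]
  generalize exp (-u x) = E at hD ⊢
  generalize exp (-v x) = F
  rw [show 1 + (1 - E - u x) / u x = (1 - E) / u x by field_simp; ring]
  field_simp
  ring

lemma tendsto_log_div_of_tendsto_div_one {f g h : α → ℝ} {L : ℝ}
    (hfg : Tendsto (fun x => f x / g x) l (𝓝 1)) (hh : Tendsto h l atTop)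
    (hg : Tendsto (fun x => log (g x) / h x) l (𝓝 L)) :
    Tendsto (fun x => log (f x) / h x) l (𝓝 L) := by
  have hlog : Tendsto (fun x => log (f x / g x)) l (𝓝 0) := by
    simpa [Function.comp_def] using (continuousAt_log one_ne_zero).tendsto.comp hfg
  have hlim := (hlog.div_atTop hh).add hg
  rw [zero_add] at hlim
  refine hlim.congr' ?_
  filter_upwards [hfg.eventually_ne one_ne_zero] with x hx
  rw [div_ne_zero_iff] at hx
  rw [log_div hx.1 hx.2, ← add_div, sub_add_cancel]

end Asymptotics

lemma tendsto_rpow_sub_one_div_atTop {s : ℝ} (hs : s < 1) :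
    Tendsto (fun ρ : ℝ => (ρ ^ s - 1) / ρ) atTop (𝓝 0) := by
  have hlim := (tendsto_rpow_neg_atTop (sub_pos.2 hs)).sub tendsto_inv_atTop_zero
  rw [sub_zero] at hlim
  refine hlim.congr' ?_
  filter_upwards [eventually_gt_atTop 0] with ρ hρ
  rw [neg_sub, sub_div, rpow_sub hρ, rpow_one, one_div]

lemma tendsto_rpow_sub_one_div_rpow_atTop {s : ℝ} (hs : 0 < s) :
    Tendsto (fun ρ : ℝ => (ρ ^ s - 1) / ρ ^ s) atTop (𝓝 1) := by
  have hlim := (tendsto_rpow_atTop hs).inv_tendsto_atTop.const_sub 1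
  rw [sub_zero] at hlim
  refine hlim.congr' ?_
  filter_upwards [eventually_gt_atTop 0] with ρ hρ
  rw [Pi.inv_apply, sub_div, div_self (rpow_pos_of_pos hρ s).ne', one_div]

lemma tendsto_rpow_sub_one_div_rpow_sub_one_atTop {s t : ℝ} (hs : 0 < s) (hst : s < t) :
    Tendsto (fun ρ : ℝ => (ρ ^ s - 1) / (ρ ^ t - 1)) atTop (𝓝 0) := by
  have hlim := ((tendsto_rpow_sub_one_div_rpow_atTop hs).div
    (tendsto_rpow_sub_one_div_rpow_atTop (hs.trans hst)) one_ne_zero).mul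
    (tendsto_rpow_neg_atTop (sub_pos.2 hst))
  rw [mul_zero] at hlim
  refine hlim.congr' ?_
  filter_upwards [eventually_gt_atTop 1] with ρ hρ
  have hρ0 : 0 < ρ := by linarith
  have ht : ρ ^ t - 1 ≠ 0 := (sub_pos.2 (one_lt_rpow hρ (hs.trans hst))).ne'
  rw [Pi.div_apply, neg_sub, rpow_sub hρ0]
  have := rpow_pos_of_pos hρ0 s
  have := rpow_pos_of_pos hρ0 t
  field_simp

lemma tendsto_log_rpow_sub_one_div_div_log {s : ℝ} (hs : 0 < s) :
    Tendsto (fun ρ : ℝ => log ((ρ ^ s - 1) / ρ) / log ρ) atTop (𝓝 (s - 1)) := by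
  refine tendsto_log_div_of_tendsto_div_one (g := fun ρ => ρ ^ (s - 1))
    ((tendsto_rpow_sub_one_div_rpow_atTop hs).congr' ?_) tendsto_log_atTop
    (tendsto_const_nhds.congr' ?_)
  · filter_upwards [eventually_gt_atTop 0] with ρ hρ
    rw [rpow_sub hρ, rpow_one]
    have := rpow_pos_of_pos hρ s
    field_simp
  · filter_upwards [eventually_gt_atTop 1] with ρ hρ
    rw [log_rpow (by linarith), mul_div_cancel_right₀ _ (log_pos hρ).ne']

/-- For independent exponential(1) variables `X, Y`, with `g1 = (ρ^r-1)/ρ` and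
`g2 = (ρ^{2r}-1)/ρ`:
`P(X+Y < g2 | X < g1) = (1 - e^{-g1} - g1 e^{-g2})/(1 - e^{-g1})`, and for
`0 < r < 1/2` this conditional probability is exponentially equal to `ρ^{2r-1}`,
i.e. `log P / log ρ → 2r - 1`. -/
theorem stmt6 {Ω : Type*} [MeasurableSpace Ω] (μ : Measure Ω) [IsProbabilityMeasure μ]
    (X Y : Ω → ℝ) (hX : Measurable X) (hY : Measurable Y)
    (hXY : IndepFun X Y μ)
    (htX : ∀ x : ℝ, 0 ≤ x → μ {ω | x < X ω} = ENNReal.ofReal (Real.exp (-x)))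
    (htY : ∀ x : ℝ, 0 ≤ x → μ {ω | x < Y ω} = ENNReal.ofReal (Real.exp (-x)))
    (r : ℝ) (hr0 : 0 < r) (hr : r < 1/2)
    (g1 g2 : ℝ → ℝ)
    (hg1 : ∀ ρ : ℝ, g1 ρ = (ρ ^ r - 1) / ρ)
    (hg2 : ∀ ρ : ℝ, g2 ρ = (ρ ^ (2*r) - 1) / ρ)
    (P : ℝ → ℝ)
    (hP : ∀ ρ : ℝ, P ρ =
      (μ ({ω | X ω + Y ω < g2 ρ} ∩ {ω | X ω < g1 ρ})).toReal
        / (μ {ω | X ω < g1 ρ}).toReal) :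
    (∀ ρ : ℝ, 1 < ρ →
      P ρ = (1 - Real.exp (-(g1 ρ)) - g1 ρ * Real.exp (-(g2 ρ)))
              / (1 - Real.exp (-(g1 ρ)))) ∧
    Tendsto (fun ρ : ℝ => Real.log (P ρ) / Real.log ρ) atTop (nhds (2*r - 1)) := by
  have hXlaw := map_eq_expMeasure_of_measure_lt hX one_pos (by simpa using htX)
  have hYlaw := map_eq_expMeasure_of_measure_lt hY one_pos (by simpa using htY)
  have hg : ∀ ρ, 1 < ρ → 0 < g1 ρ ∧ g1 ρ ≤ g2 ρ := fun ρ hρ => by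
    rw [hg1, hg2]
    exact ⟨div_pos (sub_pos.2 (one_lt_rpow hρ hr0)) (by linarith), by gcongr <;> linarith⟩
  have hformula : ∀ ρ, 1 < ρ → P ρ = (1 - exp (-(g1 ρ)) - g1 ρ * exp (-(g2 ρ)))
      / (1 - exp (-(g1 ρ))) := fun ρ hρ =>
    (hP ρ).trans <|
      toReal_measure_add_lt_inter_lt_div hX hY hXY hXlaw hYlaw (hg ρ hρ).1.le (hg ρ hρ).2
  refine ⟨hformula, ?_⟩
  have hg1_lim : Tendsto g1 atTop (𝓝 0) := by
    simpa only [← hg1] using tendsto_rpow_sub_one_div_atTop (by linarith : r < 1)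
  have hg2_lim : Tendsto g2 atTop (𝓝 0) := by
    simpa only [← hg2] using tendsto_rpow_sub_one_div_atTop (by linarith : 2 * r < 1)
  have hratio : Tendsto (fun ρ => g1 ρ / g2 ρ) atTop (𝓝 0) := by
    refine (tendsto_rpow_sub_one_div_rpow_sub_one_atTop hr0 (by linarith : r < 2 * r)).congr' ?_
    filter_upwards [eventually_gt_atTop 0] with ρ hρ
    rw [hg1, hg2, div_div_div_cancel_right₀ hρ.ne']
  have hne : ∀ᶠ ρ in atTop, g1 ρ ≠ 0 ∧ g2 ρ ≠ 0 := by
    filter_upwards [eventually_gt_atTop 1] with ρ hρ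
    exact ⟨(hg ρ hρ).1.ne', ((hg ρ hρ).1.trans_le (hg ρ hρ).2).ne'⟩
  have hP_div_g2 : Tendsto (fun ρ => P ρ / g2 ρ) atTop (𝓝 1) := by
    refine (tendsto_one_sub_exp_neg_sub_mul_exp_neg_div_div hg1_lim hg2_lim hratio hne).congr' ?_
    filter_upwards [eventually_gt_atTop 1] with ρ hρ
    rw [hformula ρ hρ]
  exact tendsto_log_div_of_tendsto_div_one hP_div_g2 tendsto_log_atTop <| by
    simpa only [← hg2] using tendsto_log_rpow_sub_one_div_div_log (by linarith : 0 < 2 * r)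
end

section
/- For 0 ≤ r ≤ 1/2, the value max_{t ∈ [r,1]} min(d_BC(r,t), d_MAC(r,t)) with d_BC and d_MAC as given below equals (1 - (3/2)r)^+, achieved at t = 1/2. -/
open Set

/-- CF cutset optimization for Mode 3 of the shared relay channel (Appendix G):
for `0 ≤ r ≤ 1/2`, `max_{t ∈ [r,1]} min(d_BC(r,t), d_MAC(r,t)) = (1 - (3/2)r)⁺`,
achieved at `t = 1/2`, where `d_MAC(r,t) = d_BC(r,1-t)`. -/
theorem stmt11 (r : ℝ) (hr0 : 0 ≤ r) (hr : r ≤ 1/2)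
    (dBC dMAC : ℝ → ℝ → ℝ)
    (hdBC : ∀ s t : ℝ, dBC s t =
      if 1/2 < t then
        (if s ≤ t / (1 - (1 - t)/2) then 1 - (s/t) * (1 - (1 - t)/2) else 0)
      else
        (if s ≤ t then 1 - s * (1/t - 1/2)
         else if s ≤ t / (1 - (1 - t)/2) then (1 - s)/(1 - t) + s/2 - 1
         else 0))
    (hdMAC : ∀ s t : ℝ, dMAC s t = dBC s (1 - t)) :
    IsGreatest {x : ℝ | ∃ t ∈ Icc r 1, x = min (dBC r t) (dMAC r t)}
        (max (1 - 3/2 * r) 0) ∧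
      min (dBC r (1/2)) (dMAC r (1/2)) = max (1 - 3/2 * r) 0 := by
  have h32 : (0:ℝ) ≤ 1 - 3/2 * r := by linarith
  have hmax : max (1 - 3/2 * r) 0 = 1 - 3/2 * r := max_eq_left h32
  have key : ∀ u : ℝ, 0 ≤ u → u ≤ 1/2 → dBC r u ≤ 1 - 3/2 * r := by
    intro u hu0 hu
    rw [hdBC, if_neg (by linarith : ¬ (1:ℝ)/2 < u)]
    split_ifs with h1 h2
    · rcases eq_or_lt_of_le hu0 with h | h
      · have hr00 : r = 0 := le_antisymm (by rw [← h] at h1; exact h1) hr0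
        simp [← h, hr00]
      · have h2u : (3:ℝ)/2 ≤ 1/u - 1/2 := by
          have : (2:ℝ) ≤ 1/u := by
            rw [le_div_iff₀ h]; linarith
          linarith
        nlinarith [mul_le_mul_of_nonneg_left h2u hr0]
    · have hu1 : (0:ℝ) < 1 - u := by linarith
      have hdiv : (1 - r)/(1 - u) ≤ 2 - 2*r := by
        rw [div_le_iff₀ hu1]; nlinarith
      linarith
    · linarith
  have hval : dBC r (1/2) = 1 - 3/2 * r := by
    rw [hdBC, if_neg (by norm_num : ¬ (1:ℝ)/2 < 1/2), if_pos hr]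
    norm_num; ring
  have hval2 : dMAC r (1/2) = 1 - 3/2 * r := by
    rw [hdMAC]; norm_num [hval]
  refine ⟨⟨⟨1/2, ⟨hr, by norm_num⟩, by rw [hval, hval2, hmax, min_self]⟩, ?_⟩,
    by rw [hval, hval2, hmax, min_self]⟩
  rintro x ⟨t, ⟨ht1, ht2⟩, rfl⟩
  rw [hmax]
  rcases le_or_gt t (1/2) with h | h
  · exact le_trans (min_le_left _ _) (key t (le_trans hr0 ht1) h)
  · refine le_trans (min_le_right _ _) ?_
    rw [hdMAC]
    exact key (1 - t) (by linarith) (by linarith)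
end
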